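/- For λ ∈ ℂ* and b ∈ ℂ, define operators on ℂ[x] ⊕ ℂ[x]‾ by L_m·f(x) = -λᵐ(x + m(b-1))f(x-m), L_m·f̄(x) = -λᵐ(x + m(b-1/2))f̄(x-m)‾, H_m·f(x) = -2bλᵐf(x-m), H_m·f̄(x) = (1-2b)λᵐ f(x-m)‾, G⁺_m·f(x) = -2λᵐ(x + (2b-1)m)f(x-m)‾, G⁻_m·f̄(x) = λᵐf(x-m), G⁺_m·f̄ = G⁻_m·f = 0. Then these satisfy [L_m, L_n] = (m-n)L_{m+n} and [L_m, H_n] = -n H_{m+n} as operators. -/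
import Mathlib


open Polynomial

/-- The shift `f(x) ↦ f(x - m)`. -/
noncomputable def shp (m : ℤ) (f : ℂ[X]) : ℂ[X] := f.comp (X - C (m : ℂ))

/-- `L_m·f = -λᵐ(x + m(b-1))f(x-m)` on the first copy, `-λᵐ(x + m(b-1/2))f̄(x-m)` on the bar copy. -/
noncomputable def omL (lam b : ℂ) (m : ℤ) (v : ℂ[X] × ℂ[X]) : ℂ[X] × ℂ[X] :=
  (-(lam ^ m) • ((X + C ((m : ℂ) * (b - 1))) * shp m v.1),
   -(lam ^ m) • ((X + C ((m : ℂ) * (b - 1/2))) * shp m v.2))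

/-- `H_m·f = -2bλᵐf(x-m)`, `H_m·f̄ = (1-2b)λᵐf(x-m)‾`. -/
noncomputable def omH (lam b : ℂ) (m : ℤ) (v : ℂ[X] × ℂ[X]) : ℂ[X] × ℂ[X] :=
  ((-2 * b * lam ^ m) • shp m v.1, ((1 - 2 * b) * lam ^ m) • shp m v.2)

/-- `G⁺_m·f = -2λᵐ(x + (2b-1)m)f(x-m)‾`, `G⁺_m·f̄ = 0`. -/
noncomputable def omGp (lam b : ℂ) (m : ℤ) (v : ℂ[X] × ℂ[X]) : ℂ[X] × ℂ[X] :=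
  (0, (-2 * lam ^ m) • ((X + C ((2 * b - 1) * (m : ℂ))) * shp m v.1))

/-- `G⁻_m·f̄ = λᵐf(x-m)`, `G⁻_m·f = 0`. -/
noncomputable def omGm (lam : ℂ) (m : ℤ) (v : ℂ[X] × ℂ[X]) : ℂ[X] × ℂ[X] :=
  (lam ^ m • shp m v.2, 0)

lemma shp_shp (m n : ℤ) (f : ℂ[X]) : shp m (shp n f) = shp (m+n) f := by
  simp [shp, comp_assoc, sub_comp, map_add]
  ring_nf

lemma shp_smul (m : ℤ) (c : ℂ) (f : ℂ[X]) : shp m (c • f) = c • shp m f := by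
  simp [shp, smul_comp]

lemma shp_mul (m : ℤ) (f g : ℂ[X]) : shp m (f * g) = shp m f * shp m g := by
  simp [shp, mul_comp]

lemma shp_X_add (m : ℤ) (a : ℂ) : shp m (X + C a) = X - C (m:ℂ) + C a := by
  simp [shp]

/-- The operators of `Ω(λ, b)` satisfy `[L_m, L_n] = (m-n)L_{m+n}` and
`[L_m, H_n] = -n H_{m+n}`. -/
theorem stmt18 (lam b : ℂ) (hlam : lam ≠ 0) (m n : ℤ) (v : ℂ[X] × ℂ[X]) :
    omL lam b m (omL lam b n v) - omL lam b n (omL lam b m v)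
      = ((m : ℂ) - n) • omL lam b (m + n) v ∧
    omL lam b m (omH lam b n v) - omH lam b n (omL lam b m v)
      = (-(n : ℂ)) • omH lam b (m + n) v := by
  constructor <;>
  · refine Prod.ext ?_ ?_ <;>
    · simp only [omL, omH, Prod.fst_sub, Prod.snd_sub, Prod.smul_fst, Prod.smul_snd,
        shp_smul, shp_mul, shp_X_add, shp_shp, add_comm n m]
      simp only [smul_eq_C_mul, smul_smul]
      rw [zpow_add₀ hlam]
      push_cast
      simp only [map_mul, map_add, map_sub, map_neg, map_one, map_ofNat]
      ring
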